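/- arXiv:2506.19758 — 4 statements merged into one kernel-verified Lean document; each statement's English description precedes it below -/
import Mathlib

section
/- For any finite-dimensional Lie algebra L over a field F and any x ∈ L, the subalgebra generated by x and the hypercenter Z*(L) is nilpotent. -/
/-!
In finite dimension the upper central series stabilises, so `Z*(L) = Z_k(L)` for some `k`.
Every element of the Lie span `K` of `x` and `Z_k(L)` has the form `t • x + z` with `z ∈ Z_k(L)`,
hence `⁅K, K⁆ ⊆ Z_k(L)`. Viewing `L` as a `K`-module, `Z_i(L)` lies in the `i`-th term of the
upper central series of `K` acting on `L`, so `K ⊆ Z_{k+1}` of that module, which is nilpotency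
of `K`.
-/

/-- The hypercenter of a Lie algebra: the union (supremum) of the upper central series. -/
def hypercenter (F : Type*) [Field F] (L : Type*) [LieRing L] [LieAlgebra F L] :
    LieIdeal F L :=
  ⨆ k : ℕ, (⊥ : LieIdeal F L).ucs k

namespace LieSubmodule

variable {R L M : Type*} [CommRing R] [LieRing L] [LieAlgebra R L]
  [AddCommGroup M] [Module R M] [LieRingModule L M] [LieModule R L M]

theorem monotone_ucs (N : LieSubmodule R L M) : Monotone fun k : ℕ ↦ N.ucs k :=
  monotone_nat_of_le_succ fun k ↦ by
    rw [ucs_succ]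
    exact le_normalizer _

theorem exists_iSup_ucs_eq [IsNoetherian R M] (N : LieSubmodule R L M) :
    ∃ k, ⨆ i, N.ucs i = N.ucs k :=
  ⟨_, WellFoundedGT.iSup_eq_monotonicSequenceLimit ⟨_, N.monotone_ucs⟩⟩

theorem restr_ucs_le (N : LieSubmodule R L M) (H : LieSubalgebra R L) (k : ℕ) :
    (N.ucs k).restr H ≤ (N.restr H).ucs k := by
  induction k with
  | zero => rfl
  | succ k ih =>
    intro m hm
    rw [mem_restr, ucs_succ, mem_normalizer] at hm
    rw [ucs_succ, mem_normalizer]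
    exact fun y ↦ ih (hm y)

end LieSubmodule

namespace LieSubalgebra

variable {R L : Type*} [CommRing R] [LieRing L] [LieAlgebra R L]

theorem isNilpotent_of_lie_mem_ucs (H : LieSubalgebra R L) (k : ℕ)
    (h : ∀ a ∈ H, ∀ b ∈ H, ⁅a, b⁆ ∈ (⊥ : LieIdeal R L).ucs k) : LieRing.IsNilpotent H := by
  refine H.toLieSubmodule.isNilpotent_iff_exists_self_le_ucs.mpr ⟨k + 1, fun a ha ↦ ?_⟩
  have hbot : (⊥ : LieIdeal R L).restr H = ⊥ := rfl
  rw [LieSubmodule.ucs_succ, ← hbot]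
  refine LieSubmodule.normalizer_mono (LieSubmodule.restr_ucs_le _ H k) ?_
  exact (LieSubmodule.mem_normalizer _ a).mpr fun b ↦ h b b.2 a ha

end LieSubalgebra

namespace LieIdeal

variable {R L : Type*} [CommRing R] [LieRing L] [LieAlgebra R L]

theorem lie_mem_of_mem_span_singleton_sup (I : LieIdeal R L) (x : L) {a b : L}
    (ha : a ∈ (R ∙ x) ⊔ (I : Submodule R L)) (hb : b ∈ (R ∙ x) ⊔ (I : Submodule R L)) :
    ⁅a, b⁆ ∈ I := by
  obtain ⟨_, hs, a', ha', rfl⟩ := Submodule.mem_sup.mp ha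
  obtain ⟨_, ht, b', hb', rfl⟩ := Submodule.mem_sup.mp hb
  obtain ⟨s, rfl⟩ := Submodule.mem_span_singleton.mp hs
  obtain ⟨t, rfl⟩ := Submodule.mem_span_singleton.mp ht
  simp only [add_lie, lie_add, smul_lie, lie_smul, lie_self, smul_zero, zero_add]
  exact add_mem (I.smul_mem t (lie_mem_left R L I _ _ ha'))
    (add_mem (I.smul_mem s (I.lie_mem hb')) (I.lie_mem hb'))

def supSpanSingleton (I : LieIdeal R L) (x : L) : LieSubalgebra R L :=
  { (R ∙ x) ⊔ (I : Submodule R L) with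
    lie_mem' := fun ha hb ↦ Submodule.mem_sup_right (I.lie_mem_of_mem_span_singleton_sup x ha hb) }

theorem lie_mem_of_mem_lieSpan_singleton_union (I : LieIdeal R L) (x : L) {a b : L}
    (ha : a ∈ LieSubalgebra.lieSpan R L ({x} ∪ (I : Set L)))
    (hb : b ∈ LieSubalgebra.lieSpan R L ({x} ∪ (I : Set L))) : ⁅a, b⁆ ∈ I := by
  have hle : LieSubalgebra.lieSpan R L ({x} ∪ (I : Set L)) ≤ I.supSpanSingleton x := by
    rw [LieSubalgebra.lieSpan_le]
    rintro y (rfl | hy)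
    · exact Submodule.mem_sup_left (Submodule.mem_span_singleton_self y)
    · exact Submodule.mem_sup_right hy
  exact I.lie_mem_of_mem_span_singleton_sup x (hle ha) (hle hb)

end LieIdeal

theorem lieSpan_with_hypercenter_isNilpotent
    (F : Type*) [Field F] (L : Type*) [LieRing L] [LieAlgebra F L]
    [Module.Finite F L] (x : L) :
    LieRing.IsNilpotent
      (LieSubalgebra.lieSpan F L ({x} ∪ (hypercenter F L : Set L))) := by
  obtain ⟨k, hk⟩ := (⊥ : LieIdeal F L).exists_iSup_ucs_eq
  refine LieSubalgebra.isNilpotent_of_lie_mem_ucs _ k fun a ha b hb ↦ ?_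
  rw [← hk]
  exact (hypercenter F L).lie_mem_of_mem_lieSpan_singleton_union x ha hb
end

section
/- If L is a finite-dimensional Lie algebra over a field of characteristic zero, then the hypercenter Z*(L) equals the nilpotentizer nil(L). -/
/-- The nilpotentizer of a Lie algebra `L`. -/
def nilSet (F : Type*) [Field F] (L : Type*) [LieRing L] [LieAlgebra F L] : Set L :=
  {x : L | ∀ h : L, LieRing.IsNilpotent (LieSubalgebra.lieSpan F L {x, h})}

/-!
Both sets equal the ideal `E` of those `v` with `(ad w) ^ n v = 0` for every `w`, `n = dim L`.
Granted that `E` is an ideal, Engel's theorem puts it inside the hypercenter, whose elements are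
killed by a power of every `ad w`; `nil(L) ⊆ E` is immediate, and for `x ∈ E` the subalgebra
generated by `x` and `h` lies in `E + F h`, all of whose brackets lie in `E`.

The substance is that `E` is an ideal. For `v ∈ E` and `g, w ∈ L` we have
`(ad (w + t ⁅w, g⁆)) ^ (n + 1) v = 0` for every scalar `t`; the field being infinite, the
coefficient of `t` vanishes, and since `ad ⁅w, g⁆ = [ad w, ad g]` this coefficient telescopes to
`(ad w) ^ (n + 1) ⁅g, v⁆ - ⁅g, (ad w) ^ (n + 1) v⁆`.
-/

open Finset

section PowAddSmul

variable {R A : Type*} [CommSemiring R] [Semiring A] [Algebra R A]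

def powAddSmulCoeff (T W : A) : ℕ → ℕ → A
  | 0, 0 => 1
  | 0, _ + 1 => 0
  | N + 1, 0 => powAddSmulCoeff T W N 0 * T
  | N + 1, k + 1 => powAddSmulCoeff T W N (k + 1) * T + powAddSmulCoeff T W N k * W

variable (T W : A)

theorem powAddSmulCoeff_eq_zero_of_lt {N k : ℕ} (h : N < k) : powAddSmulCoeff T W N k = 0 := by
  induction N generalizing k with
  | zero => cases k with
    | zero => omega
    | succ k => rfl
  | succ N ih => cases k with
    | zero => omega
    | succ k => rw [powAddSmulCoeff, ih (by omega), ih (by omega), zero_mul, zero_mul, add_zero]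

theorem powAddSmulCoeff_zero (N : ℕ) : powAddSmulCoeff T W N 0 = T ^ N := by
  induction N with
  | zero => rw [powAddSmulCoeff, pow_zero]
  | succ N ih => rw [powAddSmulCoeff, ih, pow_succ]

theorem powAddSmulCoeff_one (N : ℕ) :
    powAddSmulCoeff T W N 1 = ∑ j ∈ range N, T ^ j * W * T ^ (N - 1 - j) := by
  induction N with
  | zero => rfl
  | succ N ih =>
    rw [powAddSmulCoeff, ih, powAddSmulCoeff_zero, sum_mul, sum_range_succ,
      show N + 1 - 1 - N = 0 by omega, pow_zero, mul_one]
    congr 1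
    refine sum_congr rfl fun j hj => ?_
    rw [mul_assoc, ← pow_succ, show N - 1 - j + 1 = N + 1 - 1 - j by grind]

theorem add_smul_pow_eq_sum (t : R) (N : ℕ) :
    (T + t • W) ^ N = ∑ k ∈ range (N + 1), t ^ k • powAddSmulCoeff T W N k := by
  induction N with
  | zero => simp [powAddSmulCoeff]
  | succ N ih =>
    have hlast : powAddSmulCoeff T W N (N + 1) = 0 :=
      powAddSmulCoeff_eq_zero_of_lt T W N.lt_succ_self
    rw [pow_succ, ih, sum_mul, sum_range_succ' _ (N + 1)]
    simp only [powAddSmulCoeff, smul_add, sum_add_distrib, mul_add, smul_mul_assoc,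
      mul_smul_comm, smul_smul]
    rw [sum_range_succ (fun k => t ^ (k + 1) • (powAddSmulCoeff T W N (k + 1) * T)), hlast,
      zero_mul, smul_zero, add_zero,
      sum_range_succ' (fun k => t ^ k • (powAddSmulCoeff T W N k * T))]
    simp only [pow_succ, pow_zero, one_smul, mul_comm t]
    abel

end PowAddSmul

theorem eq_zero_of_forall_sum_pow_smul_eq_zero {K V : Type*} [Field K] [Infinite K]
    [AddCommGroup V] [Module K V] {N : ℕ} {c : ℕ → V}
    (h : ∀ t : K, ∑ k ∈ range N, t ^ k • c k = 0) {k : ℕ} (hk : k < N) : c k = 0 := by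
  refine (Module.forall_dual_apply_eq_zero_iff K (c k)).mp fun φ => ?_
  have hp : (∑ j ∈ range N, Polynomial.monomial j (φ (c j))) = 0 := by
    refine Polynomial.funext fun t => ?_
    simpa [Polynomial.eval_finsetSum, mul_comm] using congrArg φ (h t)
  simpa [Polynomial.finsetSum_coeff, Polynomial.coeff_monomial, hk] using
    congrArg (Polynomial.coeff · k) hp

theorem sum_pow_mul_commutator_mul_pow {A : Type*} [Ring A] (T G : A) (N : ℕ) :
    ∑ j ∈ range N, T ^ j * (T * G - G * T) * T ^ (N - 1 - j) = T ^ N * G - G * T ^ N := by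
  have hterm : ∀ j ∈ range N, T ^ j * (T * G - G * T) * T ^ (N - 1 - j)
      = T ^ (j + 1) * G * T ^ (N - (j + 1)) - T ^ j * G * T ^ (N - j) := by
    intro j hj
    rw [show N - j = N - (j + 1) + 1 by grind, pow_succ' T (N - (j + 1)), pow_succ,
      show N - 1 - j = N - (j + 1) by omega]
    noncomm_ring
  rw [sum_congr rfl hterm, sum_range_sub (fun i => T ^ i * G * T ^ (N - i))]
  simp

theorem sum_pow_mul_mul_pow_apply_eq_zero {K V : Type*} [Field K] [Infinite K]
    [AddCommGroup V] [Module K V] {T W : Module.End K V} {v : V} {N : ℕ}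
    (h : ∀ t : K, ((T + t • W) ^ N) v = 0) :
    (∑ j ∈ range N, T ^ j * W * T ^ (N - 1 - j)) v = 0 := by
  cases N with
  | zero => simp
  | succ N =>
    rw [← powAddSmulCoeff_one]
    refine eq_zero_of_forall_sum_pow_smul_eq_zero (K := K)
      (c := fun k => powAddSmulCoeff T W (N + 1) k v) (fun t => ?_) (by omega : 1 < N + 2)
    simpa [add_smul_pow_eq_sum T W t] using h t

open LieAlgebra Module

theorem LieSubmodule.toEnd_pow_apply_eq_zero_of_mem_ucs_bot {R L M : Type*} [CommRing R]
    [LieRing L] [LieAlgebra R L] [AddCommGroup M] [Module R M] [LieRingModule L M]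
    [LieModule R L M] {k : ℕ} {m : M} (hm : m ∈ (⊥ : LieSubmodule R L M).ucs k) (x : L) :
    (LieModule.toEnd R L M x ^ k) m = 0 := by
  induction k generalizing m with
  | zero => rwa [ucs_zero, mem_bot] at hm
  | succ k ih =>
    rw [ucs_succ, mem_normalizer] at hm
    rw [pow_succ, Module.End.mul_apply]
    exact ih (hm x)

theorem LieIdeal.lie_mem_of_mem_lieSpan_pair {R L : Type*} [CommRing R] [LieRing L]
    [LieAlgebra R L] (I : LieIdeal R L) {x : L} (hx : x ∈ I) (h : L) {a b : L}
    (ha : a ∈ LieSubalgebra.lieSpan R L {x, h}) (hb : b ∈ LieSubalgebra.lieSpan R L {x, h}) :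
    ⁅a, b⁆ ∈ I := by
  have hlie : ∀ a ∈ (I : Submodule R L) ⊔ R ∙ h, ∀ b ∈ (I : Submodule R L) ⊔ R ∙ h,
      ⁅a, b⁆ ∈ I := by
    intro _ ha' _ hb'
    obtain ⟨a, ha, _, hs, rfl⟩ := Submodule.mem_sup.mp ha'
    obtain ⟨b, hb, _, ht, rfl⟩ := Submodule.mem_sup.mp hb'
    obtain ⟨s, rfl⟩ := Submodule.mem_span_singleton.mp hs
    obtain ⟨t, rfl⟩ := Submodule.mem_span_singleton.mp ht
    simp only [add_lie, lie_add, smul_lie, lie_smul, lie_self, smul_zero, add_zero]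
    exact add_mem (add_mem (I.lie_mem hb) (I.smul_mem s (I.lie_mem hb)))
      (I.smul_mem t (lie_mem_left R L I a h ha))
  let K : LieSubalgebra R L :=
    { toSubmodule := (I : Submodule R L) ⊔ R ∙ h
      lie_mem' := fun ha hb => Submodule.mem_sup_left (hlie _ ha _ hb) }
  have hK : LieSubalgebra.lieSpan R L {x, h} ≤ K := by
    rw [LieSubalgebra.lieSpan_le]
    rintro y (rfl | rfl)
    exacts [Submodule.mem_sup_left hx,
      Submodule.mem_sup_right (Submodule.mem_span_singleton_self y)]
  exact hlie a (hK ha) b (hK hb)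

section FittingCore

variable {F L : Type*} [Field F] [LieRing L] [LieAlgebra F L] [Module.Finite F L]

theorem pow_ad_finrank_lie_eq_zero [Infinite F] {v : L}
    (hv : ∀ w : L, (ad F L w ^ finrank F L) v = 0) (g w : L) :
    (ad F L w ^ finrank F L) ⁅g, v⁆ = 0 := by
  set n := finrank F L
  have hpow : ∀ t : F, ((ad F L w + t • ad F L ⁅w, g⁆) ^ (n + 1)) v = 0 := fun t => by
    rw [← map_smul, ← map_add, pow_succ', Module.End.mul_apply, hv, map_zero]
  have had : ad F L ⁅w, g⁆ = ad F L w * ad F L g - ad F L g * ad F L w := by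
    ext x
    simp only [LinearMap.sub_apply, Module.End.mul_apply, ad_apply, lie_lie]
  have hcomm : (ad F L w ^ (n + 1) * ad F L g - ad F L g * ad F L w ^ (n + 1)) v = 0 := by
    rw [← sum_pow_mul_commutator_mul_pow, ← had]
    exact sum_pow_mul_mul_pow_apply_eq_zero hpow
  have hsucc : (ad F L w ^ (n + 1)) ⁅g, v⁆ = 0 := by
    simpa [pow_succ', hv w] using hcomm
  exact Module.End.ker_pow_le_ker_pow_finrank _ _ hsucc

variable (F L) in
/-- The intersection over `w` of the Fitting null components of `ad w`. -/
def fittingCore [Infinite F] : LieIdeal F L where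
  carrier := {v | ∀ w : L, (ad F L w ^ finrank F L) v = 0}
  add_mem' ha hb w := by rw [map_add, ha w, hb w, add_zero]
  zero_mem' _ := map_zero _
  smul_mem' t _ hv w := by rw [map_smul, hv w, smul_zero]
  lie_mem hv w := pow_ad_finrank_lie_eq_zero hv _ w

variable [Infinite F]

theorem mem_fittingCore_of_forall_exists_pow_eq_zero {v : L}
    (h : ∀ w : L, ∃ k : ℕ, (ad F L w ^ k) v = 0) : v ∈ fittingCore F L := fun w =>
  have ⟨k, hk⟩ := h w
  Module.End.ker_pow_le_ker_pow_finrank _ k hk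

theorem hypercenter_le_fittingCore : hypercenter F L ≤ fittingCore F L :=
  iSup_le fun k _ hx => mem_fittingCore_of_forall_exists_pow_eq_zero fun w =>
    ⟨k, LieSubmodule.toEnd_pow_apply_eq_zero_of_mem_ucs_bot hx w⟩

theorem fittingCore_le_hypercenter : fittingCore F L ≤ hypercenter F L := by
  have hnil : LieModule.IsNilpotent L (fittingCore F L) := by
    refine (LieModule.isNilpotent_iff_forall (R := F)).mpr fun w => ⟨finrank F L, ?_⟩
    ext v
    exact (LieSubmodule.coe_toEnd_pow F L L _ w v _).trans (v.2 w)
  obtain ⟨k, hk⟩ := (LieSubmodule.isNilpotent_iff_exists_self_le_ucs _).mp hnil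
  exact hk.trans (le_iSup (fun k => (⊥ : LieIdeal F L).ucs k) k)

theorem fittingCore_subset_nilSet : (fittingCore F L : Set L) ⊆ nilSet F L := by
  intro x hx h
  refine (LieAlgebra.isNilpotent_iff_forall (R := F)).mpr fun u => ⟨finrank F L + 1, ?_⟩
  ext s
  rw [LieSubalgebra.coe_ad_pow, pow_succ, Module.End.mul_apply]
  exact (fittingCore F L).lie_mem_of_mem_lieSpan_pair hx h u.2 s.2 u

theorem nilSet_subset_fittingCore : nilSet F L ⊆ (fittingCore F L : Set L) := by
  intro x hx
  refine mem_fittingCore_of_forall_exists_pow_eq_zero fun w => ?_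
  have hxS : x ∈ LieSubalgebra.lieSpan F L {x, w} := LieSubalgebra.subset_lieSpan (by simp)
  have hwS : w ∈ LieSubalgebra.lieSpan F L {x, w} := LieSubalgebra.subset_lieSpan (by simp)
  obtain ⟨n, hn⟩ := (LieAlgebra.isNilpotent_iff_forall (R := F)).mp (hx w) ⟨w, hwS⟩
  refine ⟨n, ?_⟩
  rw [← LieSubalgebra.coe_ad_pow F L _ ⟨w, hwS⟩ ⟨x, hxS⟩, hn]
  rfl

end FittingCore

theorem hypercenter_eq_nilSet_of_charZero
    (F : Type*) [Field F] [CharZero F] (L : Type*) [LieRing L] [LieAlgebra F L]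
    [Module.Finite F L] :
    (hypercenter F L : Set L) = nilSet F L := by
  rw [le_antisymm hypercenter_le_fittingCore fittingCore_le_hypercenter]
  exact fittingCore_subset_nilSet.antisymm nilSet_subset_fittingCore
end

section
/- If L is a completely solvable finite-dimensional Lie algebra (i.e. [L,L] is nilpotent) over any field, then nil(L) is contained in the nilradical N(L). -/
section

open LieAlgebra LieModule

theorem isNilpotent_ad_of_mem_nilSet {F L : Type*} [Field F] [LieRing L] [LieAlgebra F L]
    [Module.Finite F L] {x : L} (hx : x ∈ nilSet F L) : IsNilpotent (ad F L x) := by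
  refine Module.End.isNilpotent_iff_of_finite.mpr fun y => ?_
  let S := LieSubalgebra.lieSpan F L {x, y}
  have : LieRing.IsNilpotent S := hx y
  have hxS : x ∈ S := LieSubalgebra.subset_lieSpan (by simp)
  have hyS : y ∈ S := LieSubalgebra.subset_lieSpan (by simp)
  obtain ⟨k, hk⟩ := LieModule.isNilpotent_toEnd_of_isNilpotent F S S ⟨x, hxS⟩
  have hk' : ad F S ⟨x, hxS⟩ ^ k = 0 := hk
  exact ⟨k, by simpa [hk'] using (LieSubalgebra.coe_ad_pow F L S ⟨x, hxS⟩ ⟨y, hyS⟩ k).symm⟩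

variable {R L : Type*} [CommRing R] [LieRing L] [LieAlgebra R L]

theorem LieIdeal.lcs_succ_le_map_lcs (I : LieIdeal R L) (k : ℕ) :
    I.lcs L (k + 1) ≤ (I.lcs I k).map (LieSubmodule.incl I) := by
  induction k with
  | zero => simpa using LieSubmodule.lie_le_left I ⊤
  | succ k ih =>
    rw [LieIdeal.lcs_succ I L (k + 1), LieIdeal.lcs_succ I I k, LieSubmodule.map_bracket_eq]
    exact LieSubmodule.mono_lie_right I ih

instance LieIdeal.isNilpotent_lieModule (I : LieIdeal R L) [LieRing.IsNilpotent I] :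
    LieModule.IsNilpotent I L := by
  obtain ⟨k, hk⟩ := IsNilpotent.nilpotent R I I
  have hlcs : I.lcs I k = ⊥ := by
    rw [← LieSubmodule.toSubmodule_inj, I.coe_lcs_eq]
    simpa using hk
  refine LieModule.IsNilpotent.mk (R := R) (L := I) (M := L) (k := k + 1) ?_
  rw [← LieSubmodule.toSubmodule_inj, ← I.coe_lcs_eq]
  simpa [hlcs] using I.lcs_succ_le_map_lcs k

namespace LieAlgebra

variable (R) in
def derivedSupSpan (x : L) : LieIdeal R L where
  toSubmodule := (⁅⊤, ⊤⁆ : LieIdeal R L).toSubmodule ⊔ R ∙ x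
  lie_mem {y z} _ := Submodule.mem_sup_left <|
    LieSubmodule.lie_mem_lie (LieSubmodule.mem_top y) (LieSubmodule.mem_top z)

theorem self_mem_derivedSupSpan (x : L) : x ∈ derivedSupSpan R x :=
  Submodule.mem_sup_right (Submodule.mem_span_singleton_self x)

theorem isNilpotent_derivedSupSpan [LieRing.IsNilpotent (⁅(⊤ : LieIdeal R L), ⊤⁆ : LieIdeal R L)]
    {x : L} (hx : IsNilpotent (ad R L x)) : LieRing.IsNilpotent (derivedSupSpan R x) := by
  let D : LieIdeal R L := ⁅(⊤ : LieIdeal R L), ⊤⁆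
  let J := derivedSupSpan R x
  let x' : J := ⟨x, self_mem_derivedSupSpan x⟩
  -- `[L, L]` seen as an ideal of `J`
  let I : LieIdeal R J := D.comap J.incl
  have hspan : R ∙ x' ⊔ I.toSubmodule = ⊤ := by
    refine eq_top_iff.mpr fun y _ => ?_
    obtain ⟨d, hd, z, hz, hy⟩ := Submodule.mem_sup.mp y.2
    obtain ⟨c, rfl⟩ := Submodule.mem_span_singleton.mp hz
    have hdJ : d ∈ J := Submodule.mem_sup_left hd
    have : y = c • x' + ⟨d, hdJ⟩ := by ext; simp [x', ← hy, add_comm]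
    rw [this]
    exact Submodule.add_mem_sup (Submodule.smul_mem _ c (Submodule.mem_span_singleton_self x')) hd
  let toD : I →ₗ⁅R⁆ D :=
    { toFun i := ⟨i.1.1, i.2⟩
      map_add' _ _ := rfl
      map_smul' _ _ := rfl
      map_lie' := rfl }
  have hI : LieModule.IsNilpotent I L :=
    Function.injective_id.lieModuleIsNilpotent (f := toD) (g := LinearMap.id) fun _ _ => rfl
  have hx' : IsNilpotent (toEnd R J L x') := by
    change IsNilpotent (toEnd R L L x)
    exact hx
  have hJ : LieModule.IsNilpotent J L :=
    LieSubmodule.isNilpotentOfIsNilpotentSpanSupEqTop (L := J) (M := L) (I := I) hspan hx' hI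
  exact Function.Injective.lieModuleIsNilpotent (f := LieHom.id) (g := J.incl.toLinearMap)
    (fun _ _ => rfl) Subtype.val_injective

end LieAlgebra

end

theorem nilSet_subset_nilradical_of_completelySolvable_general
    (F : Type*) [Field F] (L : Type*) [LieRing L] [LieAlgebra F L]
    [Module.Finite F L]
    -- `L` is completely solvable: its derived algebra `[L,L]` is nilpotent
    (hcs : LieRing.IsNilpotent (⁅(⊤ : LieIdeal F L), (⊤ : LieIdeal F L)⁆ : LieIdeal F L))
    -- `N` is the nilradical: the largest nilpotent ideal of `L`
    (N : LieIdeal F L)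
    (hmax : ∀ I : LieIdeal F L, LieRing.IsNilpotent I → I ≤ N) :
    nilSet F L ⊆ (N : Set L) := fun x hx =>
  hmax _ (LieAlgebra.isNilpotent_derivedSupSpan (isNilpotent_ad_of_mem_nilSet hx))
    (LieAlgebra.self_mem_derivedSupSpan x)

theorem nilSet_subset_nilradical_of_completelySolvable
    (F : Type*) [Field F] (L : Type*) [LieRing L] [LieAlgebra F L]
    [Module.Finite F L]
    -- `L` is completely solvable: its derived algebra `[L,L]` is nilpotent
    (hcs : LieRing.IsNilpotent (⁅(⊤ : LieIdeal F L), (⊤ : LieIdeal F L)⁆ : LieIdeal F L))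
    -- `N` is the nilradical: the largest nilpotent ideal of `L`
    (N : LieIdeal F L) (hN : LieRing.IsNilpotent N)
    (hmax : ∀ I : LieIdeal F L, LieRing.IsNilpotent I → I ≤ N) :
    nilSet F L ⊆ (N : Set L) :=
  nilSet_subset_nilradical_of_completelySolvable_general F L hcs N hmax
end

section
/- In the Lie algebra L = t(2, F_q) of 2×2 upper triangular matrices over a finite field F_q, if x is not a scalar matrix then nil_L(x) = F_q·x + F_q·I is a two-dimensional abelian subalgebra of L. -/
attribute [local instance 100] LieRing.ofAssociativeRing

/-- The Lie algebra `t(2,F)` of upper triangular `2 × 2` matrices over `F`,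
as a Lie subalgebra of the matrix Lie algebra. -/
def t2 (F : Type*) [Field F] : LieSubalgebra F (Matrix (Fin 2) (Fin 2) F) where
  carrier := {A | A 1 0 = 0}
  add_mem' := by intro a b ha hb; simp_all [Set.mem_setOf_eq, Matrix.add_apply]
  zero_mem' := by simp
  smul_mem' := by intro c a ha; simp_all [Set.mem_setOf_eq, Matrix.smul_apply]
  lie_mem' := by
    intro a b ha hb
    simp_all [Set.mem_setOf_eq, Ring.lie_def, Matrix.sub_apply, Matrix.mul_apply,
      Fin.sum_univ_two]

/-- The identity matrix as an element of `t(2,F)`. -/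
def t2Id (F : Type*) [Field F] : (t2 F) :=
  ⟨1, by show (1 : Matrix (Fin 2) (Fin 2) F) 1 0 = 0; simp [Matrix.one_apply]⟩

/-- The nilpotentizer of an element `h` of a Lie algebra `L`: the set of `x ∈ L` such
that the Lie subalgebra generated by `h` and `x` is nilpotent. -/
def nilIn (F : Type*) [Field F] (L : Type*) [LieRing L] [LieAlgebra F L] (h : L) : Set L :=
  {x : L | LieRing.IsNilpotent (LieSubalgebra.lieSpan F L {h, x})}


/-!
In `t(2,F)` one computes `⁅y, z⁆ = (δ(y) o(z) - δ(z) o(y)) • E₀₁`, where `δ(u) = u₀₀ - u₁₁` and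
`o(u) = u₀₁`. If `⁅x, y⁆ ≠ 0`, the Lie subalgebra generated by `x` and `y` contains `E₀₁` and an
element `w` with `δ(w) ≠ 0`, on which `ad w` has the nonzero eigenvalue `δ(w)`; so it is not
nilpotent. If `⁅x, y⁆ = 0` it is abelian. Hence `nil(x)` is the centralizer of `x`, and for
non-scalar `x`, i.e. `(δ(x), o(x)) ≠ 0`, the centralizer consists of the `y` with `(δ(y), o(y))`
proportional to `(δ(x), o(x))`, which is `F x + F I`.
-/

/-- In a nilpotent Lie algebra every `ad x` is nilpotent, so it has no nonzero eigenvalue. -/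
theorem eq_zero_of_lie_eq_smul_of_isNilpotent {R L : Type*} [CommRing R] [IsDomain R]
    [LieRing L] [LieAlgebra R L] [Module.IsTorsionFree R L] [LieRing.IsNilpotent L]
    {x y : L} {c : R} (h : ⁅x, y⁆ = c • y) (hy : y ≠ 0) : c = 0 :=
  (Module.End.hasEigenvalue_of_hasEigenvector ⟨Module.End.mem_eigenspace_iff.mpr h, hy⟩
    |>.isNilpotent_of_isNilpotent (LieModule.isNilpotent_toEnd_of_isNilpotent R L L x)).eq_zero

namespace t2

variable {F : Type*} [Field F]

lemma coe_apply_one_zero (u : t2 F) : (u : Matrix (Fin 2) (Fin 2) F) 1 0 = 0 := u.2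

def diagDiff : t2 F →ₗ[F] F where
  toFun u := (u : Matrix (Fin 2) (Fin 2) F) 0 0 - (u : Matrix (Fin 2) (Fin 2) F) 1 1
  map_add' u v := by simp only [AddMemClass.coe_add, Matrix.add_apply]; ring
  map_smul' c u := by simp only [SetLike.val_smul, Matrix.smul_apply, smul_eq_mul,
    RingHom.id_apply]; ring

def offDiag : t2 F →ₗ[F] F where
  toFun u := (u : Matrix (Fin 2) (Fin 2) F) 0 1
  map_add' _ _ := rfl
  map_smul' _ _ := rfl

lemma diagDiff_apply (u : t2 F) :
    diagDiff u = (u : Matrix (Fin 2) (Fin 2) F) 0 0 - (u : Matrix (Fin 2) (Fin 2) F) 1 1 := rfl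

lemma offDiag_apply (u : t2 F) : offDiag u = (u : Matrix (Fin 2) (Fin 2) F) 0 1 := rfl

def e01 : t2 F :=
  ⟨Matrix.single 0 1 1, by show Matrix.single (0 : Fin 2) 1 (1 : F) 1 0 = 0; simp⟩

lemma e01_ne_zero : (e01 : t2 F) ≠ 0 := fun h => by
  simpa [e01] using congrArg (fun u : t2 F => (u : Matrix (Fin 2) (Fin 2) F) 0 1) h

lemma lie_eq_smul_e01 (y z : t2 F) :
    ⁅y, z⁆ = (diagDiff y * offDiag z - diagDiff z * offDiag y) • (e01 : t2 F) := by
  ext i j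
  fin_cases i <;> fin_cases j <;>
    simp [diagDiff_apply, offDiag_apply, e01, Ring.lie_def, Matrix.mul_apply, Fin.sum_univ_two,
      coe_apply_one_zero] <;> ring

lemma lie_e01 (w : t2 F) : ⁅w, (e01 : t2 F)⁆ = diagDiff w • (e01 : t2 F) := by
  rw [lie_eq_smul_e01]; simp [diagDiff_apply, offDiag_apply, e01]

lemma lie_eq_zero_iff {x y : t2 F} :
    ⁅x, y⁆ = 0 ↔ diagDiff x * offDiag y = diagDiff y * offDiag x := by
  rw [lie_eq_smul_e01, smul_eq_zero, sub_eq_zero, or_iff_left e01_ne_zero]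

lemma diagDiff_t2Id : diagDiff (t2Id F) = 0 := by simp [diagDiff_apply, t2Id]

lemma offDiag_t2Id : offDiag (t2Id F) = 0 := by simp [offDiag_apply, t2Id]

lemma t2Id_ne_zero : t2Id F ≠ 0 := fun h => by
  simpa [t2Id] using congrArg (fun u : t2 F => (u : Matrix (Fin 2) (Fin 2) F) 0 0) h

lemma eq_smul_t2Id {u : t2 F} (hd : diagDiff u = 0) (ho : offDiag u = 0) :
    u = (u : Matrix (Fin 2) (Fin 2) F) 0 0 • t2Id F := by
  simp only [diagDiff_apply, offDiag_apply, sub_eq_zero] at hd ho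
  ext i j
  fin_cases i <;> fin_cases j <;> simp [t2Id, coe_apply_one_zero, ho, hd]

lemma lie_eq_zero_of_mem_span {x y z : t2 F}
    (hy : y ∈ Submodule.span F {x, t2Id F}) (hz : z ∈ Submodule.span F {x, t2Id F}) :
    ⁅y, z⁆ = 0 := by
  have h_central (u : t2 F) : ⁅t2Id F, u⁆ = 0 := by
    rw [lie_eq_zero_iff, diagDiff_t2Id, offDiag_t2Id]; ring
  obtain ⟨a, b, rfl⟩ := Submodule.mem_span_pair.mp hy
  obtain ⟨c, d, rfl⟩ := Submodule.mem_span_pair.mp hz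
  simp [h_central, ← lie_skew x (t2Id F)]

lemma mem_span_pair_t2Id_iff_lie_eq_zero {x y : t2 F} (hx : diagDiff x ≠ 0 ∨ offDiag x ≠ 0) :
    y ∈ Submodule.span F {x, t2Id F} ↔ ⁅x, y⁆ = 0 := by
  refine ⟨lie_eq_zero_of_mem_span (Submodule.subset_span (Set.mem_insert _ _)), fun h => ?_⟩
  rw [lie_eq_zero_iff] at h
  obtain ⟨a, hd, ho⟩ : ∃ a : F, diagDiff y = a * diagDiff x ∧ offDiag y = a * offDiag x := by
    rcases hx with hx | hx
    · exact ⟨diagDiff y / diagDiff x, by field_simp, by field_simp; linear_combination h⟩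
    · exact ⟨offDiag y / offDiag x, by field_simp; linear_combination -h, by field_simp⟩
  have hrest := eq_smul_t2Id (u := y - a • x) (by rw [map_sub, map_smul, hd, smul_eq_mul, sub_self])
    (by rw [map_sub, map_smul, ho, smul_eq_mul, sub_self])
  rw [sub_eq_iff_eq_add'] at hrest
  rw [hrest]
  exact Submodule.mem_span_pair.mpr ⟨_, _, rfl⟩

lemma nilIn_eq_setOf_lie_eq_zero (x : t2 F) : nilIn F (t2 F) x = {y | ⁅x, y⁆ = 0} := by
  ext y
  refine ⟨fun hnil => ?_, fun (h : ⁅x, y⁆ = 0) => ?_⟩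
  · show ⁅x, y⁆ = 0
    by_contra hxy
    set N := LieSubalgebra.lieSpan F (t2 F) {x, y}
    have hxN : x ∈ N := LieSubalgebra.subset_lieSpan (Set.mem_insert _ _)
    have hyN : y ∈ N := LieSubalgebra.subset_lieSpan (Set.mem_insert_of_mem _ rfl)
    set c := diagDiff x * offDiag y - diagDiff y * offDiag x
    have hc : c ≠ 0 := fun hc => hxy (by rw [lie_eq_smul_e01]; simp [c, hc])
    have heN : (e01 : t2 F) ∈ N := by
      have : c⁻¹ • ⁅x, y⁆ = (e01 : t2 F) := by rw [lie_eq_smul_e01, smul_smul, inv_mul_cancel₀ hc, one_smul]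
      exact this ▸ N.smul_mem _ (N.lie_mem hxN hyN)
    obtain ⟨w, hwN, hw⟩ : ∃ w ∈ N, diagDiff w ≠ 0 := by
      by_cases hdx : diagDiff x = 0
      · exact ⟨y, hyN, fun hdy => hc (by simp [c, hdx, hdy])⟩
      · exact ⟨x, hxN, hdx⟩
    have : LieRing.IsNilpotent N := hnil
    refine hw (eq_zero_of_lie_eq_smul_of_isNilpotent (x := (⟨w, hwN⟩ : N)) (y := ⟨e01, heN⟩)
      (Subtype.ext (lie_e01 w)) fun h0 => e01_ne_zero (congrArg Subtype.val h0))
  · have : IsLieAbelian (LieSubalgebra.lieSpan F (t2 F) {x, y}) := by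
      rw [LieSubalgebra.isLieAbelian_lieSpan_iff]
      have h' : ⁅y, x⁆ = 0 := by rw [← lie_skew, h, neg_zero]
      simp [h, h']
    exact inferInstanceAs (LieRing.IsNilpotent (LieSubalgebra.lieSpan F (t2 F) {x, y}))

lemma finrank_span_pair_t2Id {x : t2 F} (hx : diagDiff x ≠ 0 ∨ offDiag x ≠ 0) :
    Module.finrank F (Submodule.span F {x, t2Id F}) = 2 := by
  have hli : LinearIndependent F ![x, t2Id F] := by
    refine LinearIndependent.pair_iff.mpr fun s t hst => ?_
    have hs : s = 0 := by
      have hd := congrArg diagDiff hst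
      have ho := congrArg offDiag hst
      simp only [map_add, map_smul, diagDiff_t2Id, offDiag_t2Id, smul_eq_mul, mul_zero,
        add_zero, map_zero, mul_eq_zero] at hd ho
      tauto
    subst hs
    exact ⟨rfl, by simpa [t2Id_ne_zero] using hst⟩
  rw [← Matrix.range_cons_cons_empty x (t2Id F) ![], finrank_span_eq_card hli, Fintype.card_fin]

end t2

theorem nilIn_t2_of_not_scalar_general
    (F : Type*) [Field F] (x : (t2 F))
    (hx : ¬ ∃ c : F, (x : Matrix (Fin 2) (Fin 2) F) = c • 1) :
    nilIn F (t2 F) x = (Submodule.span F {x, t2Id F} : Set (t2 F)) ∧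
    Module.finrank F (Submodule.span F {x, t2Id F} : Submodule F (t2 F)) = 2 ∧
    ∀ y ∈ nilIn F (t2 F) x, ∀ z ∈ nilIn F (t2 F) x, ⁅y, z⁆ = 0 := by
  have hx' : t2.diagDiff x ≠ 0 ∨ t2.offDiag x ≠ 0 := by
    by_contra! h
    exact hx ⟨_, congrArg Subtype.val (t2.eq_smul_t2Id h.1 h.2)⟩
  have hnil : nilIn F (t2 F) x = (Submodule.span F {x, t2Id F} : Set (t2 F)) := by
    rw [t2.nilIn_eq_setOf_lie_eq_zero]
    ext y
    exact (t2.mem_span_pair_t2Id_iff_lie_eq_zero hx').symm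
  refine ⟨hnil, t2.finrank_span_pair_t2Id hx', fun y hy z hz => ?_⟩
  rw [hnil] at hy hz
  exact t2.lie_eq_zero_of_mem_span hy hz

theorem nilIn_t2_of_not_scalar
    (F : Type*) [Field F] [Fintype F] (x : (t2 F))
    (hx : ¬ ∃ c : F, (x : Matrix (Fin 2) (Fin 2) F) = c • 1) :
    nilIn F (t2 F) x = (Submodule.span F {x, t2Id F} : Set (t2 F)) ∧
    Module.finrank F (Submodule.span F {x, t2Id F} : Submodule F (t2 F)) = 2 ∧
    ∀ y ∈ nilIn F (t2 F) x, ∀ z ∈ nilIn F (t2 F) x, ⁅y, z⁆ = 0 :=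
  nilIn_t2_of_not_scalar_general F x hx
end
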